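/- arXiv:2204.03127 — 2 statements merged into one kernel-verified Lean document; each statement's English description precedes it below -/
import Mathlib

section
/- Let G be a finite p-group containing a bottleneck subgroup N. Then G contains no subgroup isomorphic to C_p × C_p (the elementary abelian group of order p²). -/
private lemma aux_zpowers_eq {G : Type*} [Group G] [Finite G] {p : ℕ} (hp : p.Prime)
    {x a : G} {k : ℕ} (hx : orderOf x = p ^ k) (ha : a ∈ Subgroup.zpowers x)
    (hoa : orderOf a = p) :
    Subgroup.zpowers a = Subgroup.zpowers (x ^ p ^ (k - 1)) := by
  have hk : 1 ≤ k := by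
    by_contra h
    have hk0 : k = 0 := by omega
    have : orderOf a ∣ orderOf x := orderOf_dvd_of_mem_zpowers ha
    rw [hx, hk0, pow_zero, Nat.dvd_one, hoa] at this
    exact hp.one_lt.ne' this
  obtain ⟨i, hi⟩ := mem_powers_iff_mem_zpowers.mpr ha
  simp only at hi
  -- a = x ^ i
  have hap : a ^ p = 1 := by rw [← hoa]; exact pow_orderOf_eq_one a
  have hxi : x ^ (i * p) = 1 := by rw [pow_mul, hi, hap]
  have hdvd : p ^ k ∣ i * p := by rw [← hx]; exact orderOf_dvd_of_pow_eq_one hxi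
  have hdvd' : p ^ (k - 1) ∣ i := by
    have : p ^ (k - 1) * p ∣ i * p := by
      rwa [← pow_succ, Nat.sub_add_cancel hk]
    exact (Nat.mul_dvd_mul_iff_right hp.pos).mp this
  obtain ⟨j, hj⟩ := hdvd'
  have hmem : a ∈ Subgroup.zpowers (x ^ p ^ (k - 1)) := by
    rw [← hi, hj, pow_mul]
    exact ⟨j, by simp⟩
  have hle : Subgroup.zpowers a ≤ Subgroup.zpowers (x ^ p ^ (k - 1)) :=
    Subgroup.zpowers_le.mpr hmem
  have hcard1 : Nat.card (Subgroup.zpowers (x ^ p ^ (k - 1))) ∣ p := by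
    rw [Nat.card_zpowers]
    apply orderOf_dvd_of_pow_eq_one
    rw [← pow_mul, ← pow_succ, Nat.sub_add_cancel hk, ← hx, pow_orderOf_eq_one]
  have hcard2 : p ∣ Nat.card (Subgroup.zpowers (x ^ p ^ (k - 1))) := by
    have := Subgroup.card_dvd_of_le hle
    rwa [Nat.card_zpowers, hoa] at this
  have hcard : Nat.card (Subgroup.zpowers (x ^ p ^ (k - 1))) = p :=
    Nat.dvd_antisymm hcard1 hcard2
  exact Subgroup.eq_of_le_of_card_ge hle (by rw [hcard, Nat.card_zpowers, hoa])

theorem bottleneck_no_elementary_abelian {G : Type*} [Group G] [Finite G]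
    {p : ℕ} (hp : p.Prime) (hG : IsPGroup p G) (N : Subgroup G)
    (hbot : N ≠ ⊥) (htop : N ≠ ⊤)
    (hbn : ∀ H : Subgroup G, N ≤ H ∨ H ≤ N) :
    ¬ ∃ H : Subgroup G,
      Nonempty (H ≃* (Multiplicative (ZMod p) × Multiplicative (ZMod p))) := by
  rintro ⟨H, ⟨e⟩⟩
  haveI : Fact p.Prime := ⟨hp⟩
  set g : Multiplicative (ZMod p) := Multiplicative.ofAdd 1 with hgdef
  have hg : orderOf g = p := by
    rw [hgdef, orderOf_ofAdd_eq_addOrderOf]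
    simpa using ZMod.addOrderOf_one p
  set a : G := (e.symm (g, 1) : G) with hadef
  set b : G := (e.symm (1, g) : G) with hbdef
  have hoa : orderOf a = p := by
    rw [hadef, Subgroup.orderOf_coe, ← orderOf_injective e.toMonoidHom e.injective]
    simp [Prod.orderOf_mk, hg]
  have hob : orderOf b = p := by
    rw [hbdef, Subgroup.orderOf_coe, ← orderOf_injective e.toMonoidHom e.injective]
    simp [Prod.orderOf_mk, hg]
  set A := Subgroup.zpowers a with hAdef
  set B := Subgroup.zpowers b with hBdef
  have hcardA : Nat.card A = p := by rw [hAdef, Nat.card_zpowers, hoa]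
  have hcardB : Nat.card B = p := by rw [hBdef, Nat.card_zpowers, hob]
  -- A ≠ B
  have hAB : A ≠ B := by
    intro heq
    have hb : b ∈ A := heq ▸ Subgroup.mem_zpowers b
    obtain ⟨m, hm⟩ := hb
    have hm' : e.symm (1, g) = e.symm (g, 1) ^ m := by
      apply Subtype.coe_injective
      push_cast
      exact hm.symm
    have : (1, g) = ((g : Multiplicative (ZMod p)) ^ m, (1 : Multiplicative (ZMod p)) ^ m) := by
      have := congrArg e hm'
      simpa [Prod.pow_def] using this
    have hg1 : g = (1 : Multiplicative (ZMod p)) := by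
      have := congrArg Prod.snd this
      simpa using this
    rw [hg1, orderOf_one] at hg
    exact hp.one_lt.ne' hg.symm
  -- helper: if N ≤ K and card K = p then N = K
  have hNeq : ∀ K : Subgroup G, N ≤ K → Nat.card K = p → N = K := by
    intro K hle hK
    have hdvd : Nat.card N ∣ p := hK ▸ Subgroup.card_dvd_of_le hle
    have hne1 : Nat.card N ≠ 1 := by
      intro h
      exact hbot (Subgroup.eq_bot_of_card_eq N h)
    have : Nat.card N = p := ((Nat.dvd_prime hp).mp hdvd).resolve_left hne1
    exact Subgroup.eq_of_le_of_card_ge hle (by rw [hK, this])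
  rcases hbn A with hA | hA
  · have hNA : N = A := hNeq A hA hcardA
    rcases hbn B with hB | hB
    · exact hAB (hNA ▸ hNeq B hB hcardB ▸ hNA.symm ▸ rfl)
    · -- B ≤ N = A, equal cards
      rw [hNA] at hB
      exact hAB (Subgroup.eq_of_le_of_card_ge hB (by rw [hcardA, hcardB])).symm
  · rcases hbn B with hB | hB
    · have hNB : N = B := hNeq B hB hcardB
      rw [hNB] at hA
      exact hAB (Subgroup.eq_of_le_of_card_ge hA (by rw [hcardB, hcardA]))
    · -- A ≤ N and B ≤ N
      obtain ⟨x, hx⟩ : ∃ x : G, x ∉ N := by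
        by_contra h
        push_neg at h
        exact htop ((Subgroup.eq_top_iff' N).mpr h)
      have hNx : N ≤ Subgroup.zpowers x := by
        rcases hbn (Subgroup.zpowers x) with h | h
        · exact h
        · exact absurd (h (Subgroup.mem_zpowers x)) hx
      obtain ⟨k, hk⟩ : ∃ k : ℕ, orderOf x = p ^ k := by
        obtain ⟨k, hk⟩ := hG x
        exact (Nat.dvd_prime_pow hp).mp (orderOf_dvd_of_pow_eq_one hk) |>.imp
          fun m hm => hm.2
      have ha' : a ∈ Subgroup.zpowers x := hNx (hA (Subgroup.mem_zpowers a))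
      have hb' : b ∈ Subgroup.zpowers x := hNx (hB (Subgroup.mem_zpowers b))
      have e1 := aux_zpowers_eq hp hk ha' hoa
      have e2 := aux_zpowers_eq hp hk hb' hob
      exact hAB (e1.trans e2.symm)
end

section
/- Let G be a finite p-group containing a bottleneck subgroup N. Then G contains a unique subgroup of order p. -/
open Subgroup

/-- In a finite cyclic group, subgroups of prime order `p` are unique. -/
lemma cyclic_subgroup_card_prime_unique {C : Type*} [Group C] [Finite C] [IsCyclic C]
    {p : ℕ} (hp : p.Prime) {H K : Subgroup C}
    (hH : Nat.card H = p) (hK : Nat.card K = p) : H = K := by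
  classical
  cases nonempty_fintype C
  have hfil : ∀ (L : Subgroup C), Nat.card L = p →
      (L : Set C).toFinset = ({a : C | a ^ p = 1} : Finset C) := by
    intro L hL
    have hsub : (L : Set C).toFinset ⊆ ({a : C | a ^ p = 1} : Finset C) := by
      intro x hx
      have hxL : x ∈ L := Set.mem_toFinset.mp hx
      have : (⟨x, hxL⟩ : L) ^ p = 1 := by
        rw [← hL]
        exact pow_card_eq_one'
      simp only [Finset.mem_filter, Finset.mem_univ, true_and, Set.mem_setOf_eq,
        Finset.mem_coe]
      have := congrArg (Subtype.val) this
      simpa using this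
    have hcard : ({a : C | a ^ p = 1} : Finset C).card ≤ (L : Set C).toFinset.card := by
      have h1 : ({a : C | a ^ p = 1} : Finset C).card ≤ p :=
        IsCyclic.card_pow_eq_one_le hp.pos
      have h2 : (L : Set C).toFinset.card = p := by
        rw [Set.toFinset_card, ← Nat.card_eq_fintype_card]
        simpa using hL
      omega
    exact (Finset.eq_of_subset_of_card_le hsub hcard)
  have := (hfil H hH).trans (hfil K hK).symm
  ext x
  constructor
  · intro hx
    have : x ∈ (K : Set C).toFinset := this ▸ Set.mem_toFinset.mpr hx
    exact Set.mem_toFinset.mp this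
  · intro hx
    have : x ∈ (H : Set C).toFinset := this.symm ▸ Set.mem_toFinset.mpr hx
    exact Set.mem_toFinset.mp this

theorem bottleneck_unique_subgroup_order_p {G : Type*} [Group G] [Finite G]
    {p : ℕ} (hp : p.Prime) (hG : IsPGroup p G) (N : Subgroup G)
    (hbot : N ≠ ⊥) (htop : N ≠ ⊤)
    (hbn : ∀ H : Subgroup G, N ≤ H ∨ H ≤ N) :
    ∃! H : Subgroup G, Nat.card H = p := by
  classical
  cases nonempty_fintype G
  have : Fact p.Prime := ⟨hp⟩
  -- G is nontrivial
  obtain ⟨x, hxN, hx1⟩ : ∃ x ∈ N, x ≠ 1 := by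
    by_contra h
    push_neg at h
    exact hbot (eq_bot_iff.mpr fun y hy => h y hy)
  have : Nontrivial G := ⟨x, 1, hx1⟩
  -- p divides the order of G
  have hdvd : p ∣ Nat.card G := by
    obtain ⟨n, hn⟩ := IsPGroup.iff_card.mp hG
    have h1 : 1 < Nat.card G := Finite.one_lt_card
    rcases Nat.eq_zero_or_pos n with h0 | h0
    · rw [h0, pow_zero] at hn; omega
    · exact hn ▸ dvd_pow_self p h0.ne'
  -- existence of a subgroup of order p
  obtain ⟨g₀, hg₀⟩ := exists_prime_orderOf_dvd_card p (by rwa [Nat.card_eq_fintype_card] at hdvd)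
  -- the element outside N and the cyclic group containing N
  obtain ⟨g, hg⟩ : ∃ g : G, g ∉ N := by
    by_contra h
    push_neg at h
    exact htop (eq_top_iff.mpr fun y _ => h y)
  set C : Subgroup G := zpowers g with hC
  have hCcyc : IsCyclic C := by
    refine ⟨⟨⟨g, mem_zpowers g⟩, fun x => ?_⟩⟩
    obtain ⟨n, hn⟩ := x.2
    exact ⟨n, Subtype.ext (by simpa using hn)⟩
  have hNC : N ≤ C := by
    rcases hbn C with h | h
    · exact h
    · exact absurd (h (mem_zpowers g)) hg
  -- every subgroup of order p is contained in C
  have hle : ∀ H : Subgroup G, Nat.card H = p → H ≤ C := by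
    intro H hH
    rcases hbn H with h | h
    · -- N ≤ H, so N = H since H has prime order and N ≠ ⊥
      have hdvd' : Nat.card N ∣ Nat.card H := card_dvd_of_le h
      rw [hH] at hdvd'
      rcases (Nat.dvd_prime hp).mp hdvd' with h1 | h1
      · exact absurd ((Subgroup.card_eq_one).mp h1) hbot
      · have : N = H := eq_of_le_of_card_ge h (by omega)
        exact this ▸ hNC
    · exact h.trans hNC
  -- uniqueness via the cyclic group C
  have key : ∀ H K : Subgroup G, Nat.card H = p → Nat.card K = p → H = K := by
    intro H K hH hK
    have hHC := hle H hH
    have hKC := hle K hK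
    have hH' : Nat.card (H.subgroupOf C) = p := by
      rw [← hH]; exact Nat.card_congr (subgroupOfEquivOfLe hHC).toEquiv
    have hK' : Nat.card (K.subgroupOf C) = p := by
      rw [← hK]; exact Nat.card_congr (subgroupOfEquivOfLe hKC).toEquiv
    have : H.subgroupOf C = K.subgroupOf C :=
      cyclic_subgroup_card_prime_unique hp hH' hK'
    rwa [subgroupOf_inj, inf_of_le_left hHC, inf_of_le_left hKC] at this
  have hcard : Nat.card (zpowers g₀ : Subgroup G) = p := by
    rw [Nat.card_zpowers, hg₀]
  exact ⟨zpowers g₀, hcard, fun H hH => key H (zpowers g₀) hH hcard⟩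
end
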